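/- In the single-letter minimization min I(X;A) + I(X;U|Y,A) over finite alphabets 𝒰, conditional pmfs P_{U|X} and deterministic functions η : 𝒰 → 𝒜 subject to E[d(X, X̂^opt(U,Y))] ≤ D and E[Δ(A)] ≤ C, the minimum value is unchanged if the auxiliary alphabet 𝒰 is restricted to satisfy |𝒰| ≤ |𝒳||𝒜| + 2. -/

import Mathlib

open Finset

noncomputable section

/-- A probability mass function on a finite alphabet. -/
def IsPMF {α : Type} [Fintype α] (p : α → ℝ) : Prop :=
  (∀ a, 0 ≤ p a) ∧ ∑ a, p a = 1

/-- A conditional probability mass function. -/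
def IsCondPMF {α β : Type} [Fintype α] [Fintype β] (p : α → β → ℝ) : Prop :=
  ∀ a, IsPMF (p a)

/-- A Shannon strategy: an estimate function `Y → Xh` together with an action in `A`. -/
abbrev Strat (Y Xh A : Type) : Type := (Y → Xh) × A

variable {X Y A Xh : Type} [Fintype X] [Fintype Y] [Fintype A] [Fintype Xh]
  [DecidableEq X] [DecidableEq Y] [DecidableEq A] [DecidableEq Xh]

/-- Joint pmf `P_{X,Y,U}(x,y,u) = P_X(x) P_{U|X}(u|x) P_{Y|X,A}(y|x,η(u))`
for an auxiliary alphabet `Fin n`. -/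
def pUJoint (PX : X → ℝ) (PW : A → X → Y → ℝ) {n : ℕ} (PU : X → Fin n → ℝ)
    (η : Fin n → A) (x : X) (y : Y) (u : Fin n) : ℝ :=
  PX x * PU x u * PW (η u) x y

def pAu (PX : X → ℝ) {n : ℕ} (PU : X → Fin n → ℝ) (η : Fin n → A) (a : A) : ℝ :=
  ∑ x, ∑ u, if η u = a then PX x * PU x u else 0

def pXAu (PX : X → ℝ) {n : ℕ} (PU : X → Fin n → ℝ) (η : Fin n → A) (x : X) (a : A) : ℝ :=
  ∑ u, if η u = a then PX x * PU x u else 0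

def pYAu (PX : X → ℝ) (PW : A → X → Y → ℝ) {n : ℕ} (PU : X → Fin n → ℝ)
    (η : Fin n → A) (y : Y) (a : A) : ℝ :=
  ∑ x, ∑ u, if η u = a then pUJoint PX PW PU η x y u else 0

def pXYAu (PX : X → ℝ) (PW : A → X → Y → ℝ) {n : ℕ} (PU : X → Fin n → ℝ)
    (η : Fin n → A) (x : X) (y : Y) (a : A) : ℝ :=
  ∑ u, if η u = a then pUJoint PX PW PU η x y u else 0

def pYUu (PX : X → ℝ) (PW : A → X → Y → ℝ) {n : ℕ} (PU : X → Fin n → ℝ)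
    (η : Fin n → A) (y : Y) (u : Fin n) : ℝ :=
  ∑ x, pUJoint PX PW PU η x y u

/-- Mutual information `I(X;A)` with `A = η(U)` (base-2 logarithms). -/
def IXAu (PX : X → ℝ) {n : ℕ} (PU : X → Fin n → ℝ) (η : Fin n → A) : ℝ :=
  ∑ x, ∑ a, pXAu PX PU η x a * Real.logb 2 (pXAu PX PU η x a / (PX x * pAu PX PU η a))

/-- Conditional mutual information `I(X;U|Y,A)` with `A = η(U)` (base-2 logarithms). -/
def IXUcondYAu (PX : X → ℝ) (PW : A → X → Y → ℝ) {n : ℕ} (PU : X → Fin n → ℝ)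
    (η : Fin n → A) : ℝ :=
  ∑ x, ∑ y, ∑ u, pUJoint PX PW PU η x y u *
    Real.logb 2 (pUJoint PX PW PU η x y u * pYAu PX PW PU η y (η u) /
      (pXYAu PX PW PU η x y (η u) * pYUu PX PW PU η y u))

/-- Average distortion `E[d(X, X̂ᵒᵖᵗ(U,Y))]` with the optimal estimator
`X̂ᵒᵖᵗ(u,y) = argmin_{xh} E[d(X,xh)|U=u,Y=y]`, written as
`∑_{y,u} min_{xh} ∑_x P(x,y,u) d(x,xh)`. -/
def expDistU [Nonempty Xh] (PX : X → ℝ) (PW : A → X → Y → ℝ) (dist : X → Xh → ℝ)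
    {n : ℕ} (PU : X → Fin n → ℝ) (η : Fin n → A) : ℝ :=
  ∑ y, ∑ u, Finset.univ.inf' Finset.univ_nonempty
    (fun xh : Xh => ∑ x, pUJoint PX PW PU η x y u * dist x xh)

/-- Average action cost `E[Δ(η(U))]`. -/
def expCostU (PX : X → ℝ) (cost : A → ℝ) {n : ℕ} (PU : X → Fin n → ℝ)
    (η : Fin n → A) : ℝ :=
  ∑ x, ∑ u, PX x * PU x u * cost (η u)

/-- The single-letter minimization `min I(X;A) + I(X;U|Y,A)` over all finite auxiliary
alphabets (represented as `Fin n`), conditional pmfs `P_{U|X}` and functions `η : U → A`,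
subject to the distortion and cost constraints. -/
def RDCU [Nonempty Xh] (PX : X → ℝ) (PW : A → X → Y → ℝ) (dist : X → Xh → ℝ)
    (cost : A → ℝ) (D C : ℝ) : ℝ :=
  sInf { r : ℝ | ∃ n : ℕ, ∃ PU : X → Fin n → ℝ, ∃ η : Fin n → A, IsCondPMF PU ∧
    expDistU PX PW dist PU η ≤ D ∧ expCostU PX cost PU η ≤ C ∧
    r = IXAu PX PU η + IXUcondYAu PX PW PU η }

/-- The same single-letter minimization with the auxiliary-alphabet cardinality
restricted as `|U| ≤ |X||A| + 2`. -/
def RDCUbdd [Nonempty Xh] (PX : X → ℝ) (PW : A → X → Y → ℝ) (dist : X → Xh → ℝ)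
    (cost : A → ℝ) (D C : ℝ) : ℝ :=
  sInf { r : ℝ | ∃ n : ℕ, n ≤ Fintype.card X * Fintype.card A + 2 ∧
    ∃ PU : X → Fin n → ℝ, ∃ η : Fin n → A, IsCondPMF PU ∧
    expDistU PX PW dist PU η ≤ D ∧ expCostU PX cost PU η ≤ C ∧
    r = IXAu PX PU η + IXUcondYAu PX PW PU η }

/-!
Write a conditional pmf `P_{U|X}` through the law `ν = P_U` and the reverse channels
`Q u = P_{X|U=u}`. Then `I(X;A)` and `E[Δ(A)]` depend only on the joint law
`P_{X,A} = ∑ᵤ ν u • (Q u ⊗ δ_{η u})`, while the distortion and, once `P_{X,A}` is fixed,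
`I(X;U|Y,A)` are `ν`-averages of quantities attached to the single pair `(Q u, η u)`.
So everything is determined by the `ν`-average of the vectors
`(Q u ⊗ δ_{η u}, distortion of u, information of u)` in `ℝ^{X×A} × ℝ × ℝ`. These lie in the
hyperplane where the first block sums to one, of dimension `|X||A| + 1`, so by
Carathéodory the same average is a convex combination of at most `|X||A| + 2` of them,
which is a new auxiliary alphabet with the same objective, distortion and cost.
-/

section BayesInversion

-- shadows the file-level type variables, whose `DecidableEq` instances would be auto-included
variable {X Y A Xh : Type} {PX : X → ℝ} {PW : A → X → Y → ℝ} {m : ℕ}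

def bayesInv (PX : X → ℝ) (ν : Fin m → ℝ) (Q : Fin m → X → ℝ) (x : X) (u : Fin m) : ℝ :=
  ν u * Q u x / PX x

lemma pUJoint_bayesInv (hPX : ∀ x, PX x ≠ 0) (ν : Fin m → ℝ) (Q : Fin m → X → ℝ)
    (ζ : Fin m → A) (x : X) (y : Y) (u : Fin m) :
    pUJoint PX PW (bayesInv PX ν Q) ζ x y u = ν u * (Q u x * PW (ζ u) x y) := by
  have := hPX x
  simp only [pUJoint, bayesInv]
  field_simp

variable [DecidableEq A]

def jointXA (ν : Fin m → ℝ) (Q : Fin m → X → ℝ) (ζ : Fin m → A) (x : X) (a : A) : ℝ :=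
  ∑ u, ν u * if ζ u = a then Q u x else 0

lemma pXAu_bayesInv (hPX : ∀ x, PX x ≠ 0) (ν : Fin m → ℝ) (Q : Fin m → X → ℝ)
    (ζ : Fin m → A) (x : X) (a : A) :
    pXAu PX (bayesInv PX ν Q) ζ x a = jointXA ν Q ζ x a := by
  have := hPX x
  refine sum_congr rfl fun u _ => ?_
  split_ifs
  · simp only [bayesInv]
    field_simp
  · rw [mul_zero]

lemma pXYAu_bayesInv (hPX : ∀ x, PX x ≠ 0) (ν : Fin m → ℝ) (Q : Fin m → X → ℝ)
    (ζ : Fin m → A) (x : X) (y : Y) (a : A) :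
    pXYAu PX PW (bayesInv PX ν Q) ζ x y a = PW a x y * jointXA ν Q ζ x a := by
  rw [pXYAu, jointXA, mul_sum]
  refine sum_congr rfl fun u _ => ?_
  split_ifs with h
  · rw [pUJoint_bayesInv hPX, h]
    ring
  · simp

variable [Fintype X] [Fintype Y] [Fintype A] [Fintype Xh]

omit [Fintype X] in
lemma sum_jointXA (ν : Fin m → ℝ) (Q : Fin m → X → ℝ) (ζ : Fin m → A) (x : X) :
    ∑ a, jointXA ν Q ζ x a = ∑ u, ν u * Q u x := by
  simp only [jointXA, mul_ite, mul_zero]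
  rw [sum_comm]
  simp

def mutualInfoOfJoint (PX : X → ℝ) (M : X → A → ℝ) : ℝ :=
  ∑ x, ∑ a, M x a * Real.logb 2 (M x a / (PX x * ∑ x', M x' a))

def condInfoTerm (PW : A → X → Y → ℝ) (M : X → A → ℝ) (q : X → ℝ) (a : A) : ℝ :=
  ∑ x, ∑ y, q x * PW a x y *
    Real.logb 2 (q x * PW a x y * (∑ x', PW a x' y * M x' a) /
      (PW a x y * M x a * ∑ x', q x' * PW a x' y))

def distortionTerm [Nonempty Xh] (PW : A → X → Y → ℝ) (dist : X → Xh → ℝ) (q : X → ℝ)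
    (a : A) : ℝ :=
  ∑ y, univ.inf' univ_nonempty fun xh : Xh => ∑ x, q x * PW a x y * dist x xh

section

variable (ν : Fin m → ℝ) (Q : Fin m → X → ℝ) (ζ : Fin m → A)

omit [Fintype X] in
lemma sum_bayesInv (x : X) :
    ∑ u, bayesInv PX ν Q x u = (∑ a, jointXA ν Q ζ x a) / PX x := by
  simp only [sum_jointXA, bayesInv, sum_div]

variable (hPX : ∀ x, PX x ≠ 0)
include hPX

omit [Fintype A] in
lemma pAu_bayesInv (a : A) : pAu PX (bayesInv PX ν Q) ζ a = ∑ x, jointXA ν Q ζ x a :=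
  sum_congr rfl fun x _ => pXAu_bayesInv hPX ν Q ζ x a

omit [Fintype Y] [Fintype A] in
lemma pYAu_bayesInv (y : Y) (a : A) :
    pYAu PX PW (bayesInv PX ν Q) ζ y a = ∑ x, PW a x y * jointXA ν Q ζ x a :=
  sum_congr rfl fun x _ => pXYAu_bayesInv hPX ν Q ζ x y a

omit [DecidableEq A] [Fintype Y] [Fintype A] in
lemma pYUu_bayesInv (y : Y) (u : Fin m) :
    pYUu PX PW (bayesInv PX ν Q) ζ y u = ν u * ∑ x, Q u x * PW (ζ u) x y := by
  rw [pYUu, mul_sum]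
  exact sum_congr rfl fun x _ => pUJoint_bayesInv hPX ν Q ζ x y u

lemma IXAu_bayesInv : IXAu PX (bayesInv PX ν Q) ζ = mutualInfoOfJoint PX (jointXA ν Q ζ) := by
  simp only [IXAu, mutualInfoOfJoint, pXAu_bayesInv hPX, pAu_bayesInv ν Q ζ hPX]

omit [Fintype A] in
lemma IXUcondYAu_bayesInv :
    IXUcondYAu PX PW (bayesInv PX ν Q) ζ =
      ∑ u, ν u * condInfoTerm PW (jointXA ν Q ζ) (Q u) (ζ u) := by
  simp only [IXUcondYAu, condInfoTerm]
  conv_rhs =>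
    enter [2, u]; rw [mul_sum]; enter [2, x]; rw [mul_sum]
  conv_rhs => rw [sum_comm]; enter [2, x]; rw [sum_comm]
  refine sum_congr rfl fun x _ => sum_congr rfl fun y _ => sum_congr rfl fun u _ => ?_
  rw [pUJoint_bayesInv hPX, pYAu_bayesInv ν Q ζ hPX, pXYAu_bayesInv hPX, pYUu_bayesInv ν Q ζ hPX]
  rcases eq_or_ne (ν u) 0 with hν | hν
  · simp [hν]
  · -- the weight `P_U(u)` cancels inside the logarithm
    rw [mul_left_comm _ (ν u) (∑ x, Q u x * _), mul_assoc (ν u) _ (∑ x, PW _ x y * _),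
      mul_div_mul_left _ _ hν]
    ring

lemma expCostU_bayesInv (cost : A → ℝ) :
    expCostU PX cost (bayesInv PX ν Q) ζ = ∑ x, ∑ a, jointXA ν Q ζ x a * cost a := by
  refine sum_congr rfl fun x _ => ?_
  have := hPX x
  simp only [jointXA, bayesInv, sum_mul]
  rw [sum_comm]
  refine sum_congr rfl fun u _ => ?_
  simp only [mul_ite, mul_zero, ite_mul, zero_mul, sum_ite_eq, mem_univ, if_true]
  field_simp

omit [DecidableEq A] [Fintype A] in
lemma expDistU_bayesInv [Nonempty Xh] (hν : ∀ u, 0 ≤ ν u) (dist : X → Xh → ℝ) :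
    expDistU PX PW dist (bayesInv PX ν Q) ζ =
      ∑ u, ν u * distortionTerm PW dist (Q u) (ζ u) := by
  simp only [expDistU, distortionTerm, mul_sum]
  rw [sum_comm]
  refine sum_congr rfl fun u _ => sum_congr rfl fun y _ => ?_
  rw [apply_inf'_eq_inf'_comp _ _ fun a b => mul_min_of_nonneg a b (hν u)]
  refine inf'_congr _ rfl fun xh _ => ?_
  simp only [Function.comp_apply, mul_sum, pUJoint_bayesInv hPX]
  exact sum_congr rfl fun x _ => by ring

end

end BayesInversion

section Caratheodory

variable {ι V : Type*} [AddCommGroup V]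

theorem exists_convexCombination_card_le_finrank_vectorSpan {𝕜 : Type*} [Field 𝕜]
    [LinearOrder 𝕜] [IsStrictOrderedRing 𝕜] [Module 𝕜 V] [Fintype ι]
    (ν : ι → 𝕜) (hν0 : ∀ i, 0 ≤ ν i) (hν1 : ∑ i, ν i = 1) (w : ι → V) :
    ∃ k, k ≤ Module.finrank 𝕜 (vectorSpan 𝕜 (Set.range w)) + 1 ∧
      ∃ ν' : Fin k → 𝕜, ∃ φ : Fin k → ι,
        (∀ i, 0 ≤ ν' i) ∧ ∑ i, ν' i • w (φ i) = ∑ i, ν i • w i := by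
  have hmem : ∑ i, ν i • w i ∈ convexHull 𝕜 (Set.range w) := by
    rw [← centerMass_eq_of_sum_1 univ w hν1]
    exact centerMass_mem_convexHull _ (fun i _ => hν0 i) (by simp [hν1])
      fun i _ => Set.mem_range_self i
  obtain ⟨κ, _, z, ν', hz, hind, hν'0, -, hsum⟩ := eq_pos_convex_span_of_mem_convexHull hmem
  choose φ hφ using fun j => hz (Set.mem_range_self j)
  let e := (Fintype.equivFin κ).symm
  refine ⟨Fintype.card κ, ?_, ν' ∘ e, φ ∘ e, fun i => (hν'0 _).le, ?_⟩
  · exact hind.card_le_finrank_succ.trans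
      (Nat.succ_le_succ (Submodule.finrank_mono (vectorSpan_mono 𝕜 (Set.range_subset_iff.2
        fun j => hz (Set.mem_range_self j)))))
  · rw [← hsum, ← e.sum_comp]
    simp [hφ]

theorem finrank_vectorSpan_lt_of_forall_eq_one {K : Type*} [Field K] [Module K V]
    [FiniteDimensional K V] [Nonempty ι] (f : V →ₗ[K] K) (w : ι → V) (hw : ∀ i, f (w i) = 1) :
    Module.finrank K (vectorSpan K (Set.range w)) < Module.finrank K V := by
  have hle : vectorSpan K (Set.range w) ≤ LinearMap.ker f := by
    rw [vectorSpan_def, Submodule.span_le]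
    rintro _ ⟨_, ⟨i, rfl⟩, _, ⟨j, rfl⟩, rfl⟩
    simp [hw]
  have hne : LinearMap.ker f ≠ ⊤ := fun h => by
    simpa [LinearMap.ker_eq_top.1 h] using hw (Classical.arbitrary ι)
  exact (Submodule.finrank_mono hle).trans_lt (Submodule.finrank_lt hne)

end Caratheodory

section CardinalityReduction

variable {X Y A Xh : Type} [Fintype X] [Fintype Y] [Fintype A] [Fintype Xh] [DecidableEq A]
  {PX : X → ℝ}

omit [Fintype A] in
theorem exists_bayesInv_eq (hPXpos : ∀ x, 0 < PX x) (hPX1 : ∑ x, PX x = 1) {n : ℕ}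
    (PU : X → Fin n → ℝ) (hPU : IsCondPMF PU) :
    ∃ ν : Fin n → ℝ, ∃ Q : Fin n → X → ℝ, (∀ u, 0 ≤ ν u) ∧ ∑ u, ν u = 1 ∧
      (∀ u x, 0 ≤ Q u x) ∧ (∀ u, ∑ x, Q u x = 1) ∧ bayesInv PX ν Q = PU := by
  have hjoint : ∀ x u, 0 ≤ PX x * PU x u := fun x u => mul_nonneg (hPXpos x).le ((hPU x).1 u)
  set ν : Fin n → ℝ := fun u => ∑ x, PX x * PU x u
  -- the reverse channel of a null symbol is immaterial; `P_X` keeps it a pmf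
  set Q : Fin n → X → ℝ := fun u x => if ν u = 0 then PX x else PX x * PU x u / ν u
  have hν0 : ∀ u, 0 ≤ ν u := fun u => sum_nonneg fun x _ => hjoint x u
  refine ⟨ν, Q, hν0, ?_, fun u x => ?_, fun u => ?_, ?_⟩
  · rw [sum_comm]
    simp [← mul_sum, (hPU _).2, hPX1]
  · unfold Q
    split_ifs
    exacts [(hPXpos x).le, div_nonneg (hjoint x u) (hν0 u)]
  · unfold Q
    split_ifs with h
    exacts [hPX1, by rw [← sum_div, div_self h]]
  · funext x u
    have hx := (hPXpos x).ne'
    simp only [bayesInv, Q]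
    split_ifs with h
    · have hzero := (sum_eq_zero_iff_of_nonneg fun x _ => hjoint x u).1 h x (mem_univ x)
      rw [h, zero_mul, zero_div, ((mul_eq_zero.1 hzero).resolve_left hx)]
    · field_simp

theorem exists_condPMF_card_le_with_same_objectives [Nonempty Xh]
    (PW : A → X → Y → ℝ) (dist : X → Xh → ℝ) (cost : A → ℝ)
    (hPXpos : ∀ x, 0 < PX x) (hPX1 : ∑ x, PX x = 1)
    {n : ℕ} (PU : X → Fin n → ℝ) (η : Fin n → A) (hPU : IsCondPMF PU) :
    ∃ k ≤ Fintype.card X * Fintype.card A + 2, ∃ PU' : X → Fin k → ℝ, ∃ η' : Fin k → A,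
      IsCondPMF PU' ∧ expDistU PX PW dist PU' η' = expDistU PX PW dist PU η ∧
      expCostU PX cost PU' η' = expCostU PX cost PU η ∧
      IXAu PX PU' η' + IXUcondYAu PX PW PU' η' = IXAu PX PU η + IXUcondYAu PX PW PU η := by
  have hPX : ∀ x, PX x ≠ 0 := fun x => (hPXpos x).ne'
  obtain ⟨ν, Q, hν0, hν1, hQ0, hQ1, rfl⟩ := exists_bayesInv_eq hPXpos hPX1 PU hPU
  set M := jointXA ν Q η
  -- the data of `u` that the objectives see: `Q u ⊗ δ_{η u}`, its distortion and its
  -- contribution to `I(X;U|Y,A)`; the first block sums to one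
  let w : Fin n → (X × A → ℝ) × ℝ × ℝ := fun u =>
    (fun p => if η u = p.2 then Q u p.1 else 0,
      distortionTerm PW dist (Q u) (η u), condInfoTerm PW M (Q u) (η u))
  obtain ⟨k, hk, ν', φ, hν'0, hw⟩ :=
    exists_convexCombination_card_le_finrank_vectorSpan ν hν0 hν1 w
  have : Nonempty (Fin n) := Fin.pos_iff_nonempty.1 <| Nat.pos_of_ne_zero fun hn => by
    subst hn
    simp at hν1
  have hdim := finrank_vectorSpan_lt_of_forall_eq_one
    ((∑ p : X × A, LinearMap.proj p) ∘ₗ LinearMap.fst ℝ (X × A → ℝ) (ℝ × ℝ)) w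
    fun u => by simp [w, Fintype.sum_prod_type, hQ1]
  simp only [Module.finrank_prod, Module.finrank_fintype_fun_eq_card, Module.finrank_self,
    Fintype.card_prod] at hdim
  have hM : jointXA ν' (Q ∘ φ) (η ∘ φ) = M := funext fun x => funext fun a => by
    simpa [w, M, jointXA, Prod.fst_sum, Finset.sum_apply] using
      congrFun (congrArg Prod.fst hw) (x, a)
  have hD : ∑ i, ν' i * distortionTerm PW dist (Q (φ i)) (η (φ i)) =
      ∑ u, ν u * distortionTerm PW dist (Q u) (η u) := by
    simpa [w, Prod.fst_sum, Prod.snd_sum] using congrArg (fun v => v.2.1) hw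
  have hG : ∑ i, ν' i * condInfoTerm PW M (Q (φ i)) (η (φ i)) =
      ∑ u, ν u * condInfoTerm PW M (Q u) (η u) := by
    simpa [w, Prod.snd_sum] using congrArg (fun v => v.2.2) hw
  refine ⟨k, by omega, bayesInv PX ν' (Q ∘ φ), η ∘ φ, fun x => ⟨fun i => ?_, ?_⟩, ?_, ?_, ?_⟩
  · exact div_nonneg (mul_nonneg (hν'0 i) (hQ0 _ x)) (hPXpos x).le
  · rw [sum_bayesInv (ζ := η ∘ φ), hM, ← sum_bayesInv]
    exact (hPU x).2
  · rw [expDistU_bayesInv _ _ _ hPX hν'0, expDistU_bayesInv _ _ _ hPX hν0]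
    exact hD
  · rw [expCostU_bayesInv _ _ _ hPX, expCostU_bayesInv _ _ _ hPX, hM]
  · rw [IXAu_bayesInv _ _ _ hPX, IXUcondYAu_bayesInv _ _ _ hPX, IXAu_bayesInv _ _ _ hPX,
      IXUcondYAu_bayesInv _ _ _ hPX, hM]
    exact congrArg _ hG

end CardinalityReduction

theorem cardinality_bound_auxiliary_alphabet
    {X Y A Xh : Type} [Fintype X] [Fintype Y] [Fintype A] [Fintype Xh]
    [DecidableEq A]
    [Nonempty Xh]
    (PX : X → ℝ) (PW : A → X → Y → ℝ) (dist : X → Xh → ℝ) (cost : A → ℝ)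
    (hPX : IsPMF PX) (hPXpos : ∀ x, 0 < PX x)
    (D C : ℝ) :
    RDCU PX PW dist cost D C = RDCUbdd PX PW dist cost D C := by
  unfold RDCU RDCUbdd
  congr 1
  ext r
  constructor
  · rintro ⟨n, PU, η, hPU, hdist, hcost, rfl⟩
    obtain ⟨k, hk, PU', η', hPU', hdist', hcost', hobj⟩ :=
      exists_condPMF_card_le_with_same_objectives PW dist cost hPXpos hPX.2 PU η hPU
    exact ⟨k, hk, PU', η', hPU', hdist'.trans_le hdist, hcost'.trans_le hcost, hobj.symm⟩
  · rintro ⟨n, -, hn⟩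
    exact ⟨n, hn⟩
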